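/- arXiv:1003.3029 — 3 statements merged into one kernel-verified Lean document; each statement's English description precedes it below -/
import Mathlib

section
/- Let p be a prime and g a positive integer. The reduction-mod-p homomorphism from Sp(2g, ℤ) to Sp(2g, ℤ/pℤ) (applying reduction mod p to each matrix entry) is surjective. -/
/-!
Let `f : R → K` be a surjective ring map onto a field. Multiplying a symplectic matrix `N` over `K`
on the left by a suitable partial `J` (acting as `J` on the coordinate pairs indexed by some set
`I`, and as the identity elsewhere) makes its upper-left block `A` invertible, and then
`[[A, B], [C, D]] = [[1, 0], [C A⁻¹, 1]] * [[A, 0], [0, A⁻ᵀ]] * [[1, A⁻¹ B], [0, 1]]`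
with `C A⁻¹` and `A⁻¹ B` symmetric. Partial `J`s have entries `0, ±1`, and the unipotent factors
lift because symmetric matrices do. For symmetric `S`, `[[S, 0], [0, S⁻¹]]` is a product of such
unipotents and `J`; the general block-diagonal factor reduces to this case because `GL_n(K)` is
generated by diagonal matrices and transvections, and a transvection is a product of two symmetric
invertible matrices.
-/

open Matrix Submodule

theorem Pi.mem_span_basisFun_image {K m : Type*} [Field K] [Finite m] {J : Set m} {u : m → K} :
    u ∈ span K (Pi.basisFun K m '' J) ↔ ∀ i ∉ J, u i = 0 := by
  rw [Module.Basis.mem_span_image]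
  simp [Set.subset_def, Pi.basisFun_repr, not_imp_comm]

theorem exists_isCompl_span_basisFun_image {K m : Type*} [Field K] [Finite m]
    (W : Submodule K (m → K)) : ∃ J : Set m, IsCompl W (span K (Pi.basisFun K m '' J)) := by
  obtain ⟨J, hJ⟩ := (Set.toFinite {J : Set m | Disjoint W (span K (Pi.basisFun K m '' J))})
    |>.exists_maximal ⟨∅, by simp⟩
  refine ⟨J, hJ.prop, codisjoint_iff.2 (eq_top_iff.2 ?_)⟩
  rw [← (Pi.basisFun K m).span_eq, span_le]
  rintro _ ⟨j, rfl⟩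
  by_contra hj
  have hdisj : Disjoint W (span K (Pi.basisFun K m '' insert j J)) := by
    rw [Set.image_insert_eq, span_insert, sup_comm]
    exact hJ.prop.disjoint_sup_right_of_disjoint_sup_left
      ((disjoint_span_singleton' ((Pi.basisFun K m).ne_zero j)).2 hj)
  exact hj <| mem_sup_right <|
    subset_span ⟨j, hJ.2 hdisj (Set.subset_insert j J) (Set.mem_insert j J), rfl⟩

namespace Matrix

theorem exists_isSymm_map_eq {n R K : Type*} [CommRing R] [CommRing K] {f : R →+* K}
    (hf : Function.Surjective f) {S : Matrix n n K} (hS : S.IsSymm) :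
    ∃ T : Matrix n n R, T.IsSymm ∧ T.map f = S :=
  ⟨S.map (Function.surjInv hf), by rw [IsSymm, ← transpose_map, hS.eq],
    by ext; simp [Function.surjInv_eq hf]⟩

section CommRing

variable {n R : Type*} [DecidableEq n] [CommRing R]

noncomputable def partialJ (I : Set n) : Matrix (n ⊕ n) (n ⊕ n) R :=
  fromBlocks (diagonal (Iᶜ.indicator 1)) (diagonal (I.indicator 1))
    (-diagonal (I.indicator 1)) (diagonal (Iᶜ.indicator 1))

theorem map_partialJ {S : Type*} [CommRing S] (f : R →+* S) (I : Set n) :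
    (partialJ I : Matrix (n ⊕ n) (n ⊕ n) R).map f = partialJ I := by
  have hind (s : Set n) (i : n) : f (s.indicator 1 i) = s.indicator 1 i := by
    by_cases hi : i ∈ s <;> simp [hi]
  simp [partialJ, fromBlocks_map, diagonal_map, hind]

variable [Fintype n]

theorem partialJ_mem_symplecticGroup (I : Set n) : partialJ I ∈ symplecticGroup n R := by
  simp only [partialJ, SymplecticGroup.fromBlocks_mem_iff, diagonal_transpose, transpose_neg,
    diagonal_mul_diagonal, Matrix.neg_mul, Matrix.mul_neg, sub_neg_eq_add, diagonal_add]
  refine ⟨by simp only [mul_comm], by simp only [mul_comm], ?_⟩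
  rw [← diagonal_one]
  congr 1
  ext i
  by_cases hi : i ∈ I <;> simp [hi]

theorem toBlocks₁₁_partialJ_mul (I : Set n) (A B C D : Matrix n n R) :
    (partialJ I * fromBlocks A B C D).toBlocks₁₁ =
      diagonal (Iᶜ.indicator 1) * A + diagonal (I.indicator 1) * C := by
  simp [partialJ, fromBlocks_multiply]

theorem upperUnipotent_mem_symplecticGroup {S : Matrix n n R} (hS : S.IsSymm) :
    fromBlocks 1 S 0 1 ∈ symplecticGroup n R := by
  simp [SymplecticGroup.fromBlocks_mem_iff, hS.eq]

theorem lowerUnipotent_mem_symplecticGroup {S : Matrix n n R} (hS : S.IsSymm) :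
    fromBlocks 1 0 S 1 ∈ symplecticGroup n R := by
  simp [SymplecticGroup.fromBlocks_mem_iff, hS.eq]

theorem eq_zero_of_mulVec_eq_zero_of_fromBlocks_mem {A B C D : Matrix n n R}
    (hN : fromBlocks A B C D ∈ symplecticGroup n R) {v : n → R}
    (hA : A *ᵥ v = 0) (hC : C *ᵥ v = 0) : v = 0 := by
  have hinj : Function.Injective (fromBlocks A B C D).mulVec :=
    mulVec_injective_of_isUnit ((isUnit_iff_isUnit_det _).2 (SymplecticGroup.symplectic_det hN))
  have h : fromBlocks A B C D *ᵥ Sum.elim v 0 = fromBlocks A B C D *ᵥ Sum.elim 0 0 := by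
    simp [fromBlocks_mulVec, hA, hC]
  exact (Sum.elim_eq_iff.1 (hinj h)).1

theorem isSymm_mul_inv_of_fromBlocks_mem {A B C D : Matrix n n R}
    (hN : fromBlocks A B C D ∈ symplecticGroup n R) (hA : IsUnit A.det) :
    (C * A⁻¹).IsSymm := by
  have hAC : Aᵀ * C = Cᵀ * A := (SymplecticGroup.fromBlocks_mem_iff.1 hN).1
  have hAt : IsUnit Aᵀ.det := by rwa [det_transpose]
  rw [IsSymm, transpose_mul, transpose_nonsing_inv]
  calc (Aᵀ)⁻¹ * Cᵀ = (Aᵀ)⁻¹ * (Cᵀ * A * A⁻¹) := by rw [mul_nonsing_inv_cancel_right _ _ hA]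
    _ = C * A⁻¹ := by rw [← hAC, Matrix.mul_assoc, nonsing_inv_mul_cancel_left _ _ hAt]

theorem isSymm_inv_mul_of_fromBlocks_mem {A B C D : Matrix n n R}
    (hN : fromBlocks A B C D ∈ symplecticGroup n R) (hA : IsUnit A.det) :
    (A⁻¹ * B).IsSymm := by
  have hNt := SymplecticGroup.transpose_mem hN
  rw [fromBlocks_transpose] at hNt
  have := isSymm_mul_inv_of_fromBlocks_mem hNt (by rwa [det_transpose])
  rwa [← transpose_nonsing_inv, ← transpose_mul, IsSymm, transpose_transpose, eq_comm] at this

theorem fromBlocks_eq_lower_mul_diag_mul_upper {A B C D : Matrix n n R}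
    (hN : fromBlocks A B C D ∈ symplecticGroup n R) (hA : IsUnit A.det) :
    fromBlocks A B C D =
      fromBlocks 1 0 (C * A⁻¹) 1 * fromBlocks A 0 0 (A⁻¹)ᵀ * fromBlocks 1 (A⁻¹ * B) 0 1 := by
  have hAD : Aᵀ * D - Cᵀ * B = 1 := (SymplecticGroup.fromBlocks_mem_iff.1 hN).2.2
  have hAt : IsUnit Aᵀ.det := by rwa [det_transpose]
  have hD : D = C * A⁻¹ * B + (A⁻¹)ᵀ := by
    calc D = (Aᵀ)⁻¹ * (Aᵀ * D) := (nonsing_inv_mul_cancel_left _ _ hAt).symm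
      _ = (C * A⁻¹)ᵀ * B + (A⁻¹)ᵀ := by
        rw [sub_eq_iff_eq_add'.1 hAD, Matrix.mul_add, ← Matrix.mul_assoc, transpose_mul,
          transpose_nonsing_inv, Matrix.mul_one]
      _ = C * A⁻¹ * B + (A⁻¹)ᵀ := by rw [(isSymm_mul_inv_of_fromBlocks_mem hN hA).eq]
  simp [fromBlocks_multiply, Matrix.mul_assoc, mul_nonsing_inv_cancel_left _ _ hA,
    nonsing_inv_mul_cancel_right _ _ hA, hD]

theorem exists_isSymm_mul_eq_transvection {i j : n} (hij : i ≠ j) (c : R) :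
    ∃ P Q : Matrix n n R, P.IsSymm ∧ Q.IsSymm ∧ IsUnit P.det ∧ IsUnit Q.det ∧
      P * Q = transvection i j c := by
  -- the permutation matrix of the transposition `(i j)`
  set P : Matrix n n R := 1 - single i i 1 - single j j 1 + single i j 1 + single j i 1
  have hP : P.IsSymm := by
    simp only [P, IsSymm, transpose_add, transpose_sub, transpose_one, transpose_single]
    abel
  have hPP : P * P = 1 := by
    simp [P, mul_add, add_mul, mul_sub, sub_mul, single_mul_single_same,
      single_mul_single_of_ne, hij, hij.symm]
  have hPT : P * transvection i j c = P + single j j c := by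
    simp [P, transvection, mul_add, add_mul, sub_mul, single_mul_single_same,
      single_mul_single_of_ne, hij.symm]
  have hPU : IsUnit P.det := IsUnit.of_mul_eq_one _ (by rw [← det_mul, hPP, det_one])
  refine ⟨P, P + single j j c, hP, hP.add (by simp [IsSymm, transpose_single]), hPU, ?_, ?_⟩
  · rwa [← hPT, det_mul, det_transvection_of_ne _ _ hij, mul_one]
  · rw [← hPT, ← Matrix.mul_assoc, hPP, Matrix.one_mul]

end CommRing

section Field

variable {n K : Type*} [DecidableEq n] [Fintype n] [Field K]

theorem exists_isUnit_det_indicator_mul_add {A C : Matrix n n K}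
    (hker : ∀ v, A *ᵥ v = 0 → C *ᵥ v = 0 → v = 0) (hAC : Aᵀ * C = Cᵀ * A) :
    ∃ I : Set n, IsUnit (diagonal (Iᶜ.indicator 1) * A + diagonal (I.indicator 1) * C).det := by
  -- If `v` is in the kernel, `A v` vanishes on `J` and is orthogonal to `W` (as `Aᵀ C` is
  -- symmetric), hence to everything; so `A v = 0`, and then `C v ∈ W` vanishes off `J`.
  set W := (LinearMap.ker A.mulVecLin).map C.mulVecLin
  obtain ⟨J, hJ⟩ := exists_isCompl_span_basisFun_image W
  refine ⟨Jᶜ, ?_⟩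
  rw [isUnit_iff_ne_zero, Ne, ← exists_mulVec_eq_zero_iff]
  rintro ⟨v, hv0, hv⟩
  have hrow (i : n) : J.indicator 1 i * (A *ᵥ v) i + Jᶜ.indicator 1 i * (C *ᵥ v) i = 0 := by
    simpa [add_mulVec, ← mulVec_mulVec, mulVec_diagonal] using congrFun hv i
  have hxJ (i : n) (hi : i ∈ J) : (A *ᵥ v) i = 0 := by simpa [hi] using hrow i
  have hyJ (i : n) (hi : i ∉ J) : (C *ᵥ v) i = 0 := by simpa [hi] using hrow i
  have hx_orth_W : ∀ w ∈ W, (A *ᵥ v) ⬝ᵥ w = 0 := by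
    rintro _ ⟨u, hu, rfl⟩
    rw [SetLike.mem_coe, LinearMap.mem_ker, mulVecLin_apply] at hu
    rw [mulVecLin_apply, dotProduct_mulVec, ← vecMul_transpose, vecMul_vecMul, hAC,
      ← dotProduct_mulVec, ← mulVec_mulVec, hu, mulVec_zero, dotProduct_zero]
  have hx_orth_J : ∀ w ∈ span K (Pi.basisFun K n '' J), (A *ᵥ v) ⬝ᵥ w = 0 := by
    intro w hw
    refine Finset.sum_eq_zero fun i _ => ?_
    by_cases hi : i ∈ J
    · simp [hxJ i hi]
    · simp [Pi.mem_span_basisFun_image.1 hw i hi]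
  have hx : A *ᵥ v = 0 := by
    ext i
    have hi : Pi.single i 1 ∈ W ⊔ span K (Pi.basisFun K n '' J) := by
      rw [hJ.sup_eq_top]; exact mem_top
    obtain ⟨w, hw, u, hu, hwu⟩ := mem_sup.1 hi
    rw [Pi.zero_apply, ← dotProduct_single_one (A *ᵥ v), ← hwu, dotProduct_add, hx_orth_W w hw,
      hx_orth_J u hu, add_zero]
  have hy : C *ᵥ v = 0 :=
    disjoint_def.1 hJ.disjoint _ ⟨v, hx, rfl⟩ (Pi.mem_span_basisFun_image.2 hyJ)
  exact hv0 (hker v hx hy)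

theorem exists_isUnit_det_toBlocks₁₁_partialJ_mul {N : Matrix (n ⊕ n) (n ⊕ n) K}
    (hN : N ∈ symplecticGroup n K) : ∃ I : Set n, IsUnit (partialJ I * N).toBlocks₁₁.det := by
  rw [← fromBlocks_toBlocks N] at hN ⊢
  simp only [toBlocks₁₁_partialJ_mul]
  exact exists_isUnit_det_indicator_mul_add
    (fun v hA hC => eq_zero_of_mulVec_eq_zero_of_fromBlocks_mem hN hA hC)
    (SymplecticGroup.fromBlocks_mem_iff.1 hN).1

end Field

section Lift

variable {n R K : Type*} [DecidableEq n] [Fintype n] [CommRing R] [CommRing K]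

variable (n) in
def symplecticImage (f : R →+* K) : Submonoid (Matrix (n ⊕ n) (n ⊕ n) K) :=
  (symplecticGroup n R).map f.mapMatrix

variable (f : R →+* K)

theorem map_mem_symplecticImage {X : Matrix (n ⊕ n) (n ⊕ n) R} (hX : X ∈ symplecticGroup n R) :
    X.map f ∈ symplecticImage n f :=
  Submonoid.mem_map_of_mem _ hX

theorem J_mem_symplecticImage : J n K ∈ symplecticImage n f := by
  simpa using map_mem_symplecticImage f (SymplecticGroup.J_mem n R)

theorem partialJ_mem_symplecticImage (I : Set n) : partialJ I ∈ symplecticImage n f := by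
  simpa [map_partialJ] using map_mem_symplecticImage f (partialJ_mem_symplecticGroup I)

theorem mem_symplecticImage_of_mul_mem {χ N : Matrix (n ⊕ n) (n ⊕ n) K}
    (hχ : χ ∈ symplecticImage n f) (h : χ * N ∈ symplecticImage n f) :
    N ∈ symplecticImage n f := by
  obtain ⟨X, hX, rfl⟩ := hχ
  let Y : symplecticGroup n R := ⟨X, hX⟩⁻¹
  have hYX : f.mapMatrix Y * f.mapMatrix X = 1 := by
    rw [← map_mul, ← map_one f.mapMatrix]
    exact congrArg (f.mapMatrix ∘ Subtype.val) (inv_mul_cancel (⟨X, hX⟩ : symplecticGroup n R))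
  have hN := mul_mem (Submonoid.mem_map_of_mem f.mapMatrix Y.2) h
  rwa [← Matrix.mul_assoc, hYX, Matrix.one_mul] at hN

variable {f}

theorem upperUnipotent_mem_symplecticImage (hf : Function.Surjective f) {S : Matrix n n K}
    (hS : S.IsSymm) : fromBlocks 1 S 0 1 ∈ symplecticImage n f := by
  obtain ⟨T, hT, rfl⟩ := exists_isSymm_map_eq hf hS
  simpa [fromBlocks_map] using map_mem_symplecticImage f (upperUnipotent_mem_symplecticGroup hT)

theorem lowerUnipotent_mem_symplecticImage (hf : Function.Surjective f) {S : Matrix n n K}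
    (hS : S.IsSymm) : fromBlocks 1 0 S 1 ∈ symplecticImage n f := by
  obtain ⟨T, hT, rfl⟩ := exists_isSymm_map_eq hf hS
  simpa [fromBlocks_map] using map_mem_symplecticImage f (lowerUnipotent_mem_symplecticGroup hT)

theorem fromBlocks_inv_mem_symplecticImage_of_isSymm (hf : Function.Surjective f)
    {S : Matrix n n K} (hS : S.IsSymm) (hdet : IsUnit S.det) :
    fromBlocks S 0 0 S⁻¹ ∈ symplecticImage n f := by
  have h : fromBlocks 1 S 0 1 * fromBlocks 1 0 (-S⁻¹) 1 * fromBlocks 1 S 0 1 * J n K =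
      fromBlocks S 0 0 S⁻¹ := by
    simp [J, fromBlocks_multiply, mul_nonsing_inv _ hdet, nonsing_inv_mul _ hdet]
  rw [← h]
  exact mul_mem (mul_mem (mul_mem (upperUnipotent_mem_symplecticImage hf hS)
    (lowerUnipotent_mem_symplecticImage hf hS.inv.neg))
    (upperUnipotent_mem_symplecticImage hf hS))
    (J_mem_symplecticImage f)

end Lift

section FieldLift

variable {n R K : Type*} [DecidableEq n] [Fintype n] [CommRing R] [Field K] {f : R →+* K}

theorem fromBlocks_inv_transpose_mem_symplecticImage (hf : Function.Surjective f)
    {A : Matrix n n K} (hA : IsUnit A.det) : fromBlocks A 0 0 (A⁻¹)ᵀ ∈ symplecticImage n f := by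
  have hmul (A B A' B' : Matrix n n K) :
      fromBlocks A 0 0 A' * fromBlocks B 0 0 B' = fromBlocks (A * B) 0 0 (A' * B') := by
    simp [fromBlocks_multiply]
  refine diagonal_transvection_induction_of_det_ne_zero
    (fun B => fromBlocks B 0 0 (B⁻¹)ᵀ ∈ symplecticImage n f) A (isUnit_iff_ne_zero.1 hA)
    (fun d hd => ?_) (fun ⟨i, j, hij, c⟩ => ?_) (fun A B _ _ hA hB => ?_)
  · rw [(isSymm_diagonal d).inv.eq]
    exact fromBlocks_inv_mem_symplecticImage_of_isSymm hf (isSymm_diagonal d)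
      (isUnit_iff_ne_zero.2 hd)
  · obtain ⟨P, Q, hP, hQ, hPU, hQU, hPQ⟩ := exists_isSymm_mul_eq_transvection hij c
    have hinv : ((P * Q)⁻¹)ᵀ = P⁻¹ * Q⁻¹ := by
      rw [mul_inv_rev, transpose_mul, hP.inv.eq, hQ.inv.eq]
    rw [TransvectionStruct.toMatrix_mk, ← hPQ, hinv, ← hmul]
    exact mul_mem (fromBlocks_inv_mem_symplecticImage_of_isSymm hf hP hPU)
      (fromBlocks_inv_mem_symplecticImage_of_isSymm hf hQ hQU)
  · rw [mul_inv_rev, transpose_mul, ← hmul]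
    exact mul_mem hA hB

theorem mem_symplecticImage_of_isUnit_det_toBlocks₁₁ (hf : Function.Surjective f)
    {N : Matrix (n ⊕ n) (n ⊕ n) K} (hN : N ∈ symplecticGroup n K)
    (hA : IsUnit N.toBlocks₁₁.det) : N ∈ symplecticImage n f := by
  rw [← fromBlocks_toBlocks N] at hN ⊢
  rw [fromBlocks_eq_lower_mul_diag_mul_upper hN hA]
  exact mul_mem (mul_mem
    (lowerUnipotent_mem_symplecticImage hf (isSymm_mul_inv_of_fromBlocks_mem hN hA))
    (fromBlocks_inv_transpose_mem_symplecticImage hf hA))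
    (upperUnipotent_mem_symplecticImage hf (isSymm_inv_mul_of_fromBlocks_mem hN hA))

theorem symplecticGroup_le_symplecticImage (hf : Function.Surjective f) :
    symplecticGroup n K ≤ symplecticImage n f := by
  intro N hN
  obtain ⟨I, hI⟩ := exists_isUnit_det_toBlocks₁₁_partialJ_mul hN
  exact mem_symplecticImage_of_mul_mem f (partialJ_mem_symplecticImage f I)
    (mem_symplecticImage_of_isUnit_det_toBlocks₁₁ hf
      (mul_mem (partialJ_mem_symplecticGroup I) hN) hI)

end FieldLift

end Matrix

theorem sp_mod_p_surjective_general (p : ℕ) (hp : p.Prime) (g : ℕ)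
    (N : Matrix (Fin g ⊕ Fin g) (Fin g ⊕ Fin g) (ZMod p))
    (hN : N ∈ Matrix.symplecticGroup (Fin g) (ZMod p)) :
    ∃ M : Matrix (Fin g ⊕ Fin g) (Fin g ⊕ Fin g) ℤ,
      M ∈ Matrix.symplecticGroup (Fin g) ℤ ∧
      M.map (Int.cast : ℤ → ZMod p) = N := by
  have : Fact p.Prime := ⟨hp⟩
  exact symplecticGroup_le_symplecticImage (f := Int.castRingHom (ZMod p))
    ZMod.intCast_surjective hN

/-- The reduction-mod-p homomorphism `Sp(2g, ℤ) → Sp(2g, ℤ/pℤ)` (entrywise reduction)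
is surjective. -/
theorem sp_mod_p_surjective (p : ℕ) (hp : p.Prime) (g : ℕ) (hg : 0 < g)
    (N : Matrix (Fin g ⊕ Fin g) (Fin g ⊕ Fin g) (ZMod p))
    (hN : N ∈ Matrix.symplecticGroup (Fin g) (ZMod p)) :
    ∃ M : Matrix (Fin g ⊕ Fin g) (Fin g ⊕ Fin g) ℤ,
      M ∈ Matrix.symplecticGroup (Fin g) ℤ ∧
      M.map (Int.cast : ℤ → ZMod p) = N :=
  sp_mod_p_surjective_general p hp g N hN
end

section
/- Let p be a prime, g a positive integer, and let φ : ℤ^{2g} → (ℤ/pℤ)^{2g} be componentwise reduction mod p. Equip ℤ^{2g} with the standard unimodular symplectic form ω and (ℤ/pℤ)^{2g} with its mod-p reduction. Then for every Lagrangian subspace A ⊆ (ℤ/pℤ)^{2g} (i.e. a g-dimensional subspace on which the reduced form vanishes), there exists a ℤ-Lagrangian B ⊆ ℤ^{2g} (a submodule on which ω vanishes identically with ℤ^{2g}/B ≅ ℤ^g) such that φ(B) = A. -/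
/-!
A Lagrangian `A` over `𝔽_p` meeting the vertical Lagrangian `{x | x ∘ inl = 0}` trivially is the
graph `{(u, M u)}` of a matrix `M`, and isotropy of a graph means that `M` is symmetric. Every `A`
is moved into this position by rotating the symplectic pairs `(eᵢ, fᵢ)`, `i ∈ S`, where `S`
indexes `f`-coordinates on which `A ∩ {x | x ∘ inl = 0}` restricts bijectively. An entrywise lift
`N` of `M` to `ℤ` is still symmetric, so the rotated graph of `N` is a `ℤ`-Lagrangian reducing onto
`A`; its quotient is `ℤ^g` because a graph is the kernel of the surjection
`x ↦ x ∘ inr - N *ᵥ (x ∘ inl)`.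
-/

open Matrix Module

theorem Submodule.exists_finset_restrict_bijective {K n : Type*} [Field K] [Fintype n]
    (W : Submodule K (n → K)) :
    ∃ T : Finset n, (∀ w ∈ W, (∀ i ∈ T, w i = 0) → w = 0) ∧
      ∀ c : n → K, ∃ w ∈ W, ∀ i ∈ T, w i = c i := by
  classical
  let Onto (T : Finset n) : Prop := ∀ c : n → K, ∃ w ∈ W, ∀ i ∈ T, w i = c i
  obtain ⟨T, hT, hmax⟩ := (Finset.univ.filter Onto).exists_maximal
    ⟨∅, Finset.mem_filter.2 ⟨Finset.mem_univ _, fun _ => ⟨0, W.zero_mem, by simp⟩⟩⟩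
  have hTonto : Onto T := (Finset.mem_filter.1 hT).2
  refine ⟨T, fun w hw hwT => ?_, hTonto⟩
  by_contra hne
  obtain ⟨j, hj⟩ : ∃ j, w j ≠ 0 := Function.ne_iff.1 hne
  have hjT : j ∉ T := fun h => hj (hwT j h)
  -- adding a multiple of `w`, which vanishes on `T` but not at `j`, adjusts the `j`-coordinate
  have hinsert : Onto (insert j T) := fun c => by
    obtain ⟨w', hw', hw'c⟩ := hTonto c
    refine ⟨w' + ((c j - w' j) / w j) • w, W.add_mem hw' (W.smul_mem _ hw), fun i hi => ?_⟩
    rcases Finset.mem_insert.1 hi with rfl | hi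
    · simp [hj]
    · simp [hw'c i hi, hwT i hi]
  exact hjT (hmax (Finset.mem_filter.2 ⟨Finset.mem_univ _, hinsert⟩) (Finset.subset_insert j T)
    (Finset.mem_insert_self j T))

namespace StdSymplectic

variable {R : Type*} [CommRing R] {ι : Type*}

section Fintype

variable [Fintype ι]

def form (x y : ι ⊕ ι → R) : R :=
  ∑ i, (x (.inl i) * y (.inr i) - x (.inr i) * y (.inl i))

def IsIsotropic (W : Submodule R (ι ⊕ ι → R)) : Prop :=
  ∀ x ∈ W, ∀ y ∈ W, form x y = 0

theorem form_eq_dotProduct (x y : ι ⊕ ι → R) :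
    form x y = (x ∘ .inl) ⬝ᵥ (y ∘ .inr) - (x ∘ .inr) ⬝ᵥ (y ∘ .inl) := by
  simp [form, dotProduct, Finset.sum_sub_distrib]

def graphDefect (M : Matrix ι ι R) : (ι ⊕ ι → R) →ₗ[R] ι → R :=
  LinearMap.funLeft R R .inr - M.mulVecLin ∘ₗ LinearMap.funLeft R R .inl

def graph (M : Matrix ι ι R) : Submodule R (ι ⊕ ι → R) :=
  LinearMap.ker (graphDefect M)

theorem mem_graph {M : Matrix ι ι R} {x : ι ⊕ ι → R} :
    x ∈ graph M ↔ x ∘ .inr = M *ᵥ (x ∘ .inl) := by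
  simp [graph, graphDefect, sub_eq_zero, LinearMap.funLeft]

theorem graphDefect_surjective (M : Matrix ι ι R) : Function.Surjective (graphDefect M) :=
  fun y => ⟨Sum.elim 0 y, by ext i; simp [graphDefect, LinearMap.funLeft]⟩

theorem sumElim_mulVec_mem_graph (M : Matrix ι ι R) (u : ι → R) :
    Sum.elim u (M *ᵥ u) ∈ graph M := by
  simp [mem_graph]

theorem eq_sumElim_of_mem_graph {M : Matrix ι ι R} {x : ι ⊕ ι → R} (hx : x ∈ graph M) :
    x = Sum.elim (x ∘ .inl) (M *ᵥ (x ∘ .inl)) := by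
  rw [← mem_graph.1 hx, Sum.elim_comp_inl_inr]

theorem form_sumElim_mulVec (M : Matrix ι ι R) (u v : ι → R) :
    form (Sum.elim u (M *ᵥ u)) (Sum.elim v (M *ᵥ v)) = u ⬝ᵥ ((M - Mᵀ) *ᵥ v) := by
  rw [form_eq_dotProduct, Sum.elim_comp_inl, Sum.elim_comp_inr, Sum.elim_comp_inl,
    Sum.elim_comp_inr, sub_mulVec, dotProduct_sub, mulVec_transpose, dotProduct_comm u (v ᵥ* M),
    ← dotProduct_mulVec, dotProduct_comm v]

theorem comp_sumElim_mulVec {R' : Type*} [CommRing R'] (f : R →+* R') (M : Matrix ι ι R)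
    (u : ι → R) : f ∘ Sum.elim u (M *ᵥ u) = Sum.elim (f ∘ u) (M.map f *ᵥ (f ∘ u)) := by
  ext (i | i) <;> simp [RingHom.map_mulVec]

theorem comp_mem_graph_map {R' : Type*} [CommRing R'] (f : R →+* R') {M : Matrix ι ι R}
    {x : ι ⊕ ι → R} (hx : x ∈ graph M) : f ∘ x ∈ graph (M.map f) := by
  rw [eq_sumElim_of_mem_graph hx, comp_sumElim_mulVec]
  exact sumElim_mulVec_mem_graph _ _

end Fintype

variable [DecidableEq ι]

def swap (S : Finset ι) : (ι ⊕ ι → R) ≃ₗ[R] (ι ⊕ ι → R) where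
  toFun x := Sum.elim (fun i => if i ∈ S then x (.inr i) else x (.inl i))
    (fun i => if i ∈ S then -x (.inl i) else x (.inr i))
  invFun x := Sum.elim (fun i => if i ∈ S then -x (.inr i) else x (.inl i))
    (fun i => if i ∈ S then x (.inl i) else x (.inr i))
  map_add' x y := by ext (i | i) <;> by_cases hi : i ∈ S <;> simp [hi, add_comm]
  map_smul' c x := by ext (i | i) <;> by_cases hi : i ∈ S <;> simp [hi]
  left_inv x := by ext (i | i) <;> by_cases hi : i ∈ S <;> simp [hi]
  right_inv x := by ext (i | i) <;> by_cases hi : i ∈ S <;> simp [hi]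

theorem swap_comp {R' : Type*} [CommRing R'] (f : R →+* R') (S : Finset ι)
    (x : ι ⊕ ι → R) : swap S (f ∘ x) = f ∘ swap S x := by
  ext (i | i) <;> by_cases hi : i ∈ S <;> simp [swap, hi]

variable [Fintype ι]

theorem form_swap (S : Finset ι) (x y : ι ⊕ ι → R) : form (swap S x) (swap S y) = form x y :=
  Finset.sum_congr rfl fun i _ => by by_cases hi : i ∈ S <;> simp [swap, hi]; ring

theorem isIsotropic_graph_iff {M : Matrix ι ι R} : IsIsotropic (graph M) ↔ M.IsSymm := by
  refine ⟨fun h => ?_, fun h x hx y hy => ?_⟩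
  · ext j k
    have := h _ (sumElim_mulVec_mem_graph M (Pi.single j 1)) _
      (sumElim_mulVec_mem_graph M (Pi.single k 1))
    rw [form_sumElim_mulVec] at this
    exact (by simpa [sub_eq_zero] using this : M j k = M k j).symm
  · rw [eq_sumElim_of_mem_graph hx, eq_sumElim_of_mem_graph hy, form_sumElim_mulVec, h.eq,
      sub_self, zero_mulVec, dotProduct_zero]

def swapGraph (S : Finset ι) (M : Matrix ι ι R) : Submodule R (ι ⊕ ι → R) :=
  (graph M).comap (swap S).toLinearMap

theorem mem_swapGraph {S : Finset ι} {M : Matrix ι ι R} {x : ι ⊕ ι → R} :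
    x ∈ swapGraph S M ↔ swap S x ∈ graph M :=
  Iff.rfl

theorem map_swapGraph {R' : Type*} [CommRing R'] [Algebra R R']
    (hf : Function.Surjective (algebraMap R R')) (S : Finset ι) (N : Matrix ι ι R) :
    (swapGraph S N).map ((Algebra.linearMap R R').compLeft (ι ⊕ ι)) =
      (swapGraph S (N.map (algebraMap R R'))).restrictScalars R := by
  have hred (x : ι ⊕ ι → R) :
      (Algebra.linearMap R R').compLeft (ι ⊕ ι) x = algebraMap R R' ∘ x := rfl
  ext z
  simp only [Submodule.mem_map, Submodule.restrictScalars_mem, mem_swapGraph]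
  constructor
  · rintro ⟨x, hx, rfl⟩
    rw [hred, swap_comp]
    exact comp_mem_graph_map _ hx
  · intro hz
    obtain ⟨u, hu⟩ : ∃ u, algebraMap R R' ∘ u = swap S z ∘ .inl :=
      ⟨Function.surjInv hf ∘ (swap S z ∘ .inl), funext fun i => Function.surjInv_eq hf _⟩
    refine ⟨(swap S).symm (Sum.elim u (N *ᵥ u)),
      by simpa using sumElim_mulVec_mem_graph N u, ?_⟩
    apply (swap S).injective
    rw [hred, swap_comp, LinearEquiv.apply_symm_apply, comp_sumElim_mulVec, hu,
      ← eq_sumElim_of_mem_graph hz]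

section Field

variable {K : Type*} [Field K]

theorem IsIsotropic.exists_swap_transverse {A : Submodule K (ι ⊕ ι → K)}
    (hA : IsIsotropic A) : ∃ S : Finset ι, ∀ x ∈ A, swap S x ∘ .inl = 0 → x = 0 := by
  obtain ⟨T, hTinj, hTonto⟩ :=
    (A ⊓ LinearMap.ker (LinearMap.funLeft K K .inl)).exists_finset_restrict_bijective
  refine ⟨Finset.univ.filter (.inr · ∈ T), fun x hx hxS => ?_⟩
  have hxT (i : ι) : (if .inr i ∈ T then x (.inr i) else x (.inl i)) = 0 := by
    simpa [swap] using congrFun hxS i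
  -- `form x w`, for the `w ∈ A` whose `T`-coordinates are those of `f_{i₀}`, is `x (inl i₀)`
  have hinl (i₀ : ι) (hi₀ : .inr i₀ ∈ T) : x (.inl i₀) = 0 := by
    obtain ⟨w, ⟨hwA, hw0⟩, hw⟩ := hTonto (Pi.single (.inr i₀) 1)
    have := hA x hx w hwA
    rw [form_eq_dotProduct, show w ∘ .inl = 0 from hw0, dotProduct_zero, sub_zero, dotProduct,
      Finset.sum_eq_single i₀] at this
    · simpa [hw _ hi₀] using this
    · intro i _ hi
      by_cases h : .inr i ∈ T
      · simp [hw _ h, hi]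
      · simp [show x (.inl i) = 0 by simpa [h] using hxT i]
    · simp
  have hx0 (i : ι) : x (.inl i) = 0 := by
    by_cases h : .inr i ∈ T
    · exact hinl i h
    · simpa [h] using hxT i
  refine hTinj x ⟨hx, funext hx0⟩ ?_
  rintro (i | i) hi
  · exact hx0 i
  · simpa [hi] using hxT i

theorem exists_eq_graph_of_transverse {W : Submodule K (ι ⊕ ι → K)}
    (hdim : finrank K W = Fintype.card ι) (hW : ∀ x ∈ W, x ∘ .inl = 0 → x = 0) :
    ∃ M : Matrix ι ι K, W = graph M := by
  let π : W →ₗ[K] ι → K := LinearMap.funLeft K K .inl ∘ₗ W.subtype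
  have hπ : Function.Injective π := by
    rw [← LinearMap.ker_eq_bot, eq_bot_iff]
    rintro ⟨x, hx⟩ h
    simpa using hW x hx h
  let e : W ≃ₗ[K] ι → K := .ofBijective π ⟨hπ,
    (LinearMap.injective_iff_surjective_of_finrank_eq_finrank (by simpa using hdim)).1 hπ⟩
  let M :=
    LinearMap.toMatrix' (LinearMap.funLeft K K .inr ∘ₗ W.subtype ∘ₗ e.symm.toLinearMap)
  have hle : W ≤ graph M := fun x hx => by
    have : e.symm (x ∘ .inl) = ⟨x, hx⟩ := e.symm_apply_eq.2 rfl
    simp [mem_graph, M, this, LinearMap.funLeft]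
  refine ⟨M, le_antisymm hle fun z hz => ?_⟩
  obtain ⟨a, ha⟩ := e.surjective (z ∘ .inl)
  have : (a : ι ⊕ ι → K) ∘ .inl = z ∘ .inl := ha
  rw [eq_sumElim_of_mem_graph hz, ← this, ← eq_sumElim_of_mem_graph (hle a.2)]
  exact a.2

theorem IsIsotropic.exists_eq_swapGraph {A : Submodule K (ι ⊕ ι → K)} (hA : IsIsotropic A)
    (hdim : finrank K A = Fintype.card ι) :
    ∃ (S : Finset ι) (M : Matrix ι ι K), M.IsSymm ∧ A = swapGraph S M := by
  obtain ⟨S, hS⟩ := hA.exists_swap_transverse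
  obtain ⟨M, hM⟩ := exists_eq_graph_of_transverse (W := A.map (swap S).toLinearMap)
    (by rw [LinearEquiv.finrank_map_eq, hdim]) (by rintro _ ⟨x, hx, rfl⟩ h; simp [hS x hx h])
  refine ⟨S, M, isIsotropic_graph_iff.1 ?_, ?_⟩
  · rw [← hM]
    rintro _ ⟨x, hx, rfl⟩ _ ⟨y, hy, rfl⟩
    exact (form_swap S x y).trans (hA x hx y hy)
  · rw [swapGraph, ← hM, Submodule.comap_map_eq_of_injective (swap S).injective]

end Field

theorem IsIsotropic.exists_lift {K : Type*} [Field K] [Algebra R K]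
    (hf : Function.Surjective (algebraMap R K)) {A : Submodule K (ι ⊕ ι → K)}
    (hA : IsIsotropic A) (hdim : finrank K A = Fintype.card ι) :
    ∃ B : Submodule R (ι ⊕ ι → R), IsIsotropic B ∧
      Nonempty (((ι ⊕ ι → R) ⧸ B) ≃ₗ[R] (ι → R)) ∧
      B.map ((Algebra.linearMap R K).compLeft (ι ⊕ ι)) = A.restrictScalars R := by
  obtain ⟨S, M, hM, rfl⟩ := hA.exists_eq_swapGraph hdim
  let N := M.map (Function.surjInv hf)
  have hNM : N.map (algebraMap R K) = M := by
    ext i j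
    exact Function.surjInv_eq hf _
  refine ⟨swapGraph S N, fun x hx y hy => ?_, ⟨?_⟩, hNM ▸ map_swapGraph hf S N⟩
  · rw [← form_swap S]
    exact isIsotropic_graph_iff.2 (hM.map _) _ hx _ hy
  · exact (Submodule.quotEquivOfEq _ _ (LinearMap.ker_comp _ _).symm).trans
      (LinearMap.quotKerEquivOfSurjective _ ((graphDefect_surjective N).comp (swap S).surjective))

end StdSymplectic

theorem lagrangian_lifts_mod_p_general (p : ℕ) (hp : p.Prime) (g : ℕ)
    (ω : ((Fin g ⊕ Fin g) → ℤ) → ((Fin g ⊕ Fin g) → ℤ) → ℤ)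
    (hω : ∀ x y, ω x y =
      ∑ i : Fin g, (x (Sum.inl i) * y (Sum.inr i) - x (Sum.inr i) * y (Sum.inl i)))
    (ωp : ((Fin g ⊕ Fin g) → ZMod p) → ((Fin g ⊕ Fin g) → ZMod p) → ZMod p)
    (hωp : ∀ x y, ωp x y =
      ∑ i : Fin g, (x (Sum.inl i) * y (Sum.inr i) - x (Sum.inr i) * y (Sum.inl i)))
    (φ : ((Fin g ⊕ Fin g) → ℤ) →ₗ[ℤ] ((Fin g ⊕ Fin g) → ZMod p))
    (hφ : ∀ x i, φ x i = (x i : ZMod p))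
    (A : Submodule (ZMod p) ((Fin g ⊕ Fin g) → ZMod p))
    (hAdim : Module.finrank (ZMod p) A = g)
    (hAiso : ∀ x ∈ A, ∀ y ∈ A, ωp x y = 0) :
    ∃ B : Submodule ℤ ((Fin g ⊕ Fin g) → ℤ),
      (∀ x ∈ B, ∀ y ∈ B, ω x y = 0) ∧
      Nonempty ((((Fin g ⊕ Fin g) → ℤ) ⧸ B) ≃ₗ[ℤ] (Fin g → ℤ)) ∧
      B.map φ = A.restrictScalars ℤ := by
  have : Fact p.Prime := ⟨hp⟩
  obtain rfl : ω = StdSymplectic.form := funext₂ hω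
  obtain rfl : ωp = StdSymplectic.form := funext₂ hωp
  obtain rfl : φ = (Algebra.linearMap ℤ (ZMod p)).compLeft (Fin g ⊕ Fin g) :=
    LinearMap.ext fun x => funext (hφ x)
  exact StdSymplectic.IsIsotropic.exists_lift ZMod.intCast_surjective hAiso
    (hAdim.trans (Fintype.card_fin g).symm)

/-- Every Lagrangian subspace of `(ℤ/pℤ)^{2g}` (w.r.t. the mod-p reduction of the
standard symplectic form `ω` on `ℤ^{2g}`) is the image under componentwise mod-p
reduction of a `ℤ`-Lagrangian `B ⊆ ℤ^{2g}` (a submodule with `ω|_B ≡ 0` and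
`ℤ^{2g}/B ≅ ℤ^g`). -/
theorem lagrangian_lifts_mod_p (p : ℕ) (hp : p.Prime) (g : ℕ) (hg : 0 < g)
    (ω : ((Fin g ⊕ Fin g) → ℤ) → ((Fin g ⊕ Fin g) → ℤ) → ℤ)
    (hω : ∀ x y, ω x y =
      ∑ i : Fin g, (x (Sum.inl i) * y (Sum.inr i) - x (Sum.inr i) * y (Sum.inl i)))
    (ωp : ((Fin g ⊕ Fin g) → ZMod p) → ((Fin g ⊕ Fin g) → ZMod p) → ZMod p)
    (hωp : ∀ x y, ωp x y =
      ∑ i : Fin g, (x (Sum.inl i) * y (Sum.inr i) - x (Sum.inr i) * y (Sum.inl i)))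
    (φ : ((Fin g ⊕ Fin g) → ℤ) →ₗ[ℤ] ((Fin g ⊕ Fin g) → ZMod p))
    (hφ : ∀ x i, φ x i = (x i : ZMod p))
    (A : Submodule (ZMod p) ((Fin g ⊕ Fin g) → ZMod p))
    (hAdim : Module.finrank (ZMod p) A = g)
    (hAiso : ∀ x ∈ A, ∀ y ∈ A, ωp x y = 0) :
    ∃ B : Submodule ℤ ((Fin g ⊕ Fin g) → ℤ),
      (∀ x ∈ B, ∀ y ∈ B, ω x y = 0) ∧
      Nonempty ((((Fin g ⊕ Fin g) → ℤ) ⧸ B) ≃ₗ[ℤ] (Fin g → ℤ)) ∧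
      B.map φ = A.restrictScalars ℤ :=
  lagrangian_lifts_mod_p_general p hp g ω hω ωp hωp φ hφ A hAdim hAiso
end

section
/- The group Sp(2g, ℤ) acts transitively on ℤ-Lagrangians: if B and B' are submodules of ℤ^{2g} with ω|_B ≡ 0, ω|_{B'} ≡ 0, ℤ^{2g}/B ≅ ℤ^g and ℤ^{2g}/B' ≅ ℤ^g, then there exists h ∈ Sp(2g, ℤ) with h(B) = B'. -/
/-!
A Lagrangian `B` with free quotient is a direct summand of rank `g`, so a basis `a` of `B`
extends to functionals `F j` on `ℤ^{2g}` with `F j (a i) = δᵢⱼ`. Since the symplectic form is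
unimodular, `F j = ω(·, b₀ j)`; correcting `b₀` by elements of `B` makes it isotropic, and
`(a, b)` is then a symplectic basis. The matrix with these columns is symplectic and carries the
standard Lagrangian `span {eᵢ}` onto `B`; transitivity follows by composing two such matrices.
-/

open Matrix

theorem Submodule.exists_retraction_of_projective_quotient {R M : Type*} [Ring R]
    [AddCommGroup M] [Module R M] (B : Submodule R M) [Module.Projective R (M ⧸ B)] :
    ∃ r : M →ₗ[R] B, r ∘ₗ B.subtype = LinearMap.id :=
  ((Function.Exact.split_tfae (LinearMap.exact_subtype_mkQ B) B.injective_subtype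
    B.mkQ_surjective).out 0 1).mp (B.mkQ.exists_rightInverse_of_surjective B.range_mkQ)

theorem Module.Basis.exists_dual_of_projective_quotient {R M ι : Type*} [CommRing R]
    [AddCommGroup M] [Module R M] [DecidableEq ι] {B : Submodule R M}
    [Module.Projective R (M ⧸ B)] (v : Module.Basis ι R B) :
    ∃ F : ι → Module.Dual R M, ∀ i j, F j (v i) = if i = j then 1 else 0 := by
  obtain ⟨r, hr⟩ := B.exists_retraction_of_projective_quotient
  refine ⟨fun j => v.coord j ∘ₗ r, fun i j => ?_⟩
  have hrv : r (v i) = v i := LinearMap.congr_fun hr (v i)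
  simp [hrv, Finsupp.single_apply]

theorem LinearMap.BilinForm.IsAlt.exists_isotropic_dual {R M ι : Type*} [CommRing R]
    [AddCommGroup M] [Module R M] [Fintype ι] [LinearOrder ι] {φ : LinearMap.BilinForm R M}
    (hφ : φ.IsAlt) {a b₀ : ι → M} (ha : ∀ i j, φ (a i) (a j) = 0)
    (hab : ∀ i j, φ (a i) (b₀ j) = if i = j then 1 else 0) :
    ∃ b : ι → M, (∀ i j, φ (a i) (b j) = if i = j then 1 else 0) ∧
      ∀ i j, φ (b i) (b j) = 0 := by
  -- subtract from each `b₀ i` the upper-triangular part of the Gram matrix of `b₀`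
  let μ : ι → ι → R := fun i k => if i < k then φ (b₀ i) (b₀ k) else 0
  have hba : ∀ i j, φ (b₀ i) (a j) = -if j = i then 1 else 0 := fun i j => by
    rw [← hφ.neg_eq, hab]
  refine ⟨fun i => b₀ i - ∑ k, μ i k • a k, fun i j => ?_, fun i j => ?_⟩
  · simp [hab, ha]
  · have expand : φ (b₀ i - ∑ k, μ i k • a k) (b₀ j - ∑ k, μ j k • a k) =
        φ (b₀ i) (b₀ j) + μ j i - μ i j := by
      simp [hba, hab, ha]
    rw [expand]
    rcases lt_trichotomy i j with h | rfl | h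
    · simp [μ, h, h.not_gt]
    · simp [μ, hφ (b₀ i)]
    · simp [μ, h, h.not_gt, ← hφ.neg_eq (b₀ j)]

namespace Matrix

theorem exists_dotProduct_mulVec_eq_of_isUnit {R m : Type*} [CommRing R] [Fintype m]
    [DecidableEq m] {A : Matrix m m R} (hA : IsUnit A) (F : Module.Dual R (m → R)) :
    ∃ y, ∀ x, x ⬝ᵥ (A *ᵥ y) = F x := by
  obtain ⟨u, rfl⟩ := hA
  refine ⟨↑u⁻¹ *ᵥ (dotProductEquiv R m).symm F, fun x => ?_⟩
  rw [mulVec_mulVec, Units.mul_inv, one_mulVec, dotProduct_comm]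
  exact congr($((dotProductEquiv R m).apply_symm_apply F) x)

theorem transpose_mul_mul_apply {R m : Type*} [CommRing R] [Fintype m] (A C : Matrix m m R)
    (p q : m) :
    (Cᵀ * A * C) p q = C.col p ⬝ᵥ (A *ᵥ C.col q) := by
  rw [Matrix.mul_assoc, mul_apply, dotProduct]
  simp [mulVec, dotProduct, Matrix.mul_apply]

section SymplecticForm

variable (n R : Type*) [Fintype n] [DecidableEq n] [CommRing R]

def symplecticForm : LinearMap.BilinForm R (n ⊕ n → R) := toLinearMap₂' R (-J n R)

def standardLagrangian : Submodule R (n ⊕ n → R) :=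
  Submodule.span R (Set.range fun i => Pi.single (.inl i) 1)

variable {n R}

theorem symplecticForm_apply (x y : n ⊕ n → R) :
    symplecticForm n R x y = ∑ i, (x (.inl i) * y (.inr i) - x (.inr i) * y (.inl i)) := by
  simp [symplecticForm, toLinearMap₂'_apply, J, Fintype.sum_sum_type, one_apply,
    Finset.sum_sub_distrib]
  ring

theorem symplecticForm_isAlt : (symplecticForm n R).IsAlt := fun x => by
  simp [symplecticForm_apply, mul_comm]

theorem exists_symplecticForm_eq (F : Module.Dual R (n ⊕ n → R)) :
    ∃ y, ∀ x, symplecticForm n R x y = F x := by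
  simpa only [symplecticForm, toLinearMap₂'_apply'] using
    exists_dotProduct_mulVec_eq_of_isUnit
      ((isUnit_iff_isUnit_det _).mpr (isUnit_det_J n R)).neg F

theorem mem_symplecticGroup_iff_symplecticForm_col {C : Matrix (n ⊕ n) (n ⊕ n) R} :
    C ∈ symplecticGroup n R ↔
      ∀ p q, symplecticForm n R (C.col p) (C.col q) = (-J n R) p q := by
  rw [SymplecticGroup.mem_iff', ← neg_inj, ← Matrix.neg_mul, ← Matrix.mul_neg,
    ← Matrix.ext_iff]
  simp only [symplecticForm, toLinearMap₂'_apply', transpose_mul_mul_apply]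

theorem transpose_of_sumElim_mem_symplecticGroup {a b : n → n ⊕ n → R}
    (haa : ∀ i j, symplecticForm n R (a i) (a j) = 0)
    (hbb : ∀ i j, symplecticForm n R (b i) (b j) = 0)
    (hab : ∀ i j, symplecticForm n R (a i) (b j) = if i = j then 1 else 0) :
    (of (Sum.elim a b))ᵀ ∈ symplecticGroup n R := by
  have hba : ∀ i j, symplecticForm n R (b i) (a j) = -if j = i then 1 else 0 := fun i j => by
    rw [← symplecticForm_isAlt.neg_eq, hab]
  rw [mem_symplecticGroup_iff_symplecticForm_col]
  rintro (i | i) (j | j) <;> simp [J, haa, hbb, hab, hba, one_apply, eq_comm]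

end SymplecticForm

theorem exists_mem_symplecticGroup_map_standardLagrangian_eq {R n : Type*} [CommRing R]
    [IsDomain R] [IsPrincipalIdealRing R] [Fintype n] [LinearOrder n]
    (B : Submodule R (n ⊕ n → R))
    (hB : ∀ x ∈ B, ∀ y ∈ B, symplecticForm n R x y = 0)
    (hquot : Nonempty (((n ⊕ n → R) ⧸ B) ≃ₗ[R] (n → R))) :
    ∃ C ∈ symplecticGroup n R, (standardLagrangian n R).map C.mulVecLin = B := by
  obtain ⟨q⟩ := hquot
  have : Module.Projective R ((n ⊕ n → R) ⧸ B) := .of_equiv q.symm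
  have hrank : Module.finrank R B = Fintype.card n := by
    have := B.finrank_quotient_add_finrank
    simp [q.finrank_eq] at this
    omega
  let v : Module.Basis n R B :=
    (Module.finBasisOfFinrankEq R B hrank).reindex (Fintype.equivFin n).symm
  have hv : ∀ i j, symplecticForm n R (v i) (v j) = 0 := fun i j => hB _ (v i).2 _ (v j).2
  obtain ⟨F, hF⟩ := v.exists_dual_of_projective_quotient
  choose b₀ hb₀ using fun j => exists_symplecticForm_eq (F j)
  obtain ⟨b, hab, hbb⟩ := symplecticForm_isAlt.exists_isotropic_dual hv
    (fun i j => (hb₀ j _).trans (hF i j))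
  refine ⟨_, transpose_of_sumElim_mem_symplecticGroup hv hbb hab, ?_⟩
  have hcol : (of (Sum.elim (fun i => (v i : n ⊕ n → R)) b))ᵀ.mulVecLin ∘
      (fun i => Pi.single (.inl i) 1) = B.subtype ∘ v := by
    ext; simp
  rw [standardLagrangian, Submodule.map_span, ← Set.range_comp, hcol, Set.range_comp,
    ← Submodule.map_span, v.span_eq, Submodule.map_top, Submodule.range_subtype]

end Matrix

theorem sp_Z_transitive_on_lagrangians_general (g : ℕ)
    (ω : ((Fin g ⊕ Fin g) → ℤ) → ((Fin g ⊕ Fin g) → ℤ) → ℤ)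
    (hω : ∀ x y, ω x y =
      ∑ i : Fin g, (x (Sum.inl i) * y (Sum.inr i) - x (Sum.inr i) * y (Sum.inl i)))
    (B B' : Submodule ℤ ((Fin g ⊕ Fin g) → ℤ))
    (hBiso : ∀ x ∈ B, ∀ y ∈ B, ω x y = 0)
    (hB'iso : ∀ x ∈ B', ∀ y ∈ B', ω x y = 0)
    (hBquot : Nonempty ((((Fin g ⊕ Fin g) → ℤ) ⧸ B) ≃ₗ[ℤ] (Fin g → ℤ)))
    (hB'quot : Nonempty ((((Fin g ⊕ Fin g) → ℤ) ⧸ B') ≃ₗ[ℤ] (Fin g → ℤ))) :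
    ∃ h ∈ Matrix.symplecticGroup (Fin g) ℤ,
      B.map h.mulVecLin = B' := by
  obtain rfl : ω = fun x y => symplecticForm (Fin g) ℤ x y :=
    funext₂ fun x y => by rw [hω, symplecticForm_apply]
  obtain ⟨C, hC, rfl⟩ :=
    exists_mem_symplecticGroup_map_standardLagrangian_eq B hBiso hBquot
  obtain ⟨C', hC', rfl⟩ :=
    exists_mem_symplecticGroup_map_standardLagrangian_eq B' hB'iso hB'quot
  let S : symplecticGroup (Fin g) ℤ := ⟨C, hC⟩
  let S' : symplecticGroup (Fin g) ℤ := ⟨C', hC'⟩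
  have hS : (S' * S⁻¹).1 * C = C' := congr_arg Subtype.val (inv_mul_cancel_right S' S)
  refine ⟨_, (S' * S⁻¹).2, ?_⟩
  rw [← Submodule.map_comp, ← mulVecLin_mul, hS]

/-- `Sp(2g, ℤ)` acts transitively on `ℤ`-Lagrangians of `ℤ^{2g}` (submodules on
which the standard symplectic form vanishes and with quotient `≅ ℤ^g`). -/
theorem sp_Z_transitive_on_lagrangians (g : ℕ) (hg : 0 < g)
    (ω : ((Fin g ⊕ Fin g) → ℤ) → ((Fin g ⊕ Fin g) → ℤ) → ℤ)
    (hω : ∀ x y, ω x y =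
      ∑ i : Fin g, (x (Sum.inl i) * y (Sum.inr i) - x (Sum.inr i) * y (Sum.inl i)))
    (B B' : Submodule ℤ ((Fin g ⊕ Fin g) → ℤ))
    (hBiso : ∀ x ∈ B, ∀ y ∈ B, ω x y = 0)
    (hB'iso : ∀ x ∈ B', ∀ y ∈ B', ω x y = 0)
    (hBquot : Nonempty ((((Fin g ⊕ Fin g) → ℤ) ⧸ B) ≃ₗ[ℤ] (Fin g → ℤ)))
    (hB'quot : Nonempty ((((Fin g ⊕ Fin g) → ℤ) ⧸ B') ≃ₗ[ℤ] (Fin g → ℤ))) :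
    ∃ h ∈ Matrix.symplecticGroup (Fin g) ℤ,
      B.map h.mulVecLin = B' :=
  sp_Z_transitive_on_lagrangians_general g ω hω B B' hBiso hB'iso hBquot hB'quot
end
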